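/- Let T be a trivial 3-cutset of G, with {a} a connected component of G − T. If T is subordinated both to a 3-cutset S and to a 3-cutset S′, then S = S′; that is, a trivial cutset can be subordinated to at most one cutset. -/

import Mathlib

/-!
Each component of `G − S` contains exactly one vertex of `T`, and likewise for `S'`. Suppose some
`s' ∈ S'` is not in `S`; it lies in the component of some `t ∈ T`. As `S'` has only one vertex
besides `a` and `s'`, one of the other two vertices `q` of `T` has a component `C_q` avoiding `S'`;
let `p` be the third. The set `S' ∩ (S ∪ C_p)` misses `s'`, so it has at most two vertices and by
triconnectivity cannot separate `p` from `q`: hence `p` reaches some `w ∈ S \ S'` in `G − S'`.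
By triconnectivity again `w` has a neighbour in `C_q`, so `q` reaches `w` in `G − S'` too,
contradicting that `S'` separates `p` from `q`. Thus `S' ⊆ S`, and both have three vertices.
-/

namespace Paper

variable {V : Type*}

/-- `S ⊆ V(G)` is a cutset of `G`: the graph `G − S` is disconnected. -/
def IsCutset (G : SimpleGraph V) (S : Set V) : Prop :=
  ¬ (G.induce (Sᶜ : Set V)).Connected

/-- A 3-cutset: a cutset of exactly 3 vertices. -/
def IsThreeCutset (G : SimpleGraph V) (S : Set V) : Prop :=
  S.ncard = 3 ∧ IsCutset G S

/-- `G` is triconnected: at least 4 vertices and deleting any at most 2 vertices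
leaves a connected graph. -/
def IsTriconnected [Fintype V] (G : SimpleGraph V) : Prop :=
  4 ≤ Fintype.card V ∧
    ∀ X : Set V, X.ncard ≤ 2 → (G.induce (Xᶜ : Set V)).Connected

/-- `x` and `y` both survive the deletion of `R` and lie in the same connected
component of `G − R`. -/
def ReachOutside (G : SimpleGraph V) (R : Set V) (x y : V) : Prop :=
  ∃ (hx : x ∈ (Rᶜ : Set V)) (hy : y ∈ (Rᶜ : Set V)),
    (G.induce (Rᶜ : Set V)).Reachable ⟨x, hx⟩ ⟨y, hy⟩

/-- `R` splits `X`: two vertices of `X \ R` lie in different connected components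
of `G − R`. -/
def Splits (G : SimpleGraph V) (R X : Set V) : Prop :=
  ∃ x ∈ X, ∃ y ∈ X, x ∉ R ∧ y ∉ R ∧ ¬ ReachOutside G R x y

/-- Two 3-cutsets are dependent iff one splits the other. -/
def Dependent (G : SimpleGraph V) (S T : Set V) : Prop :=
  Splits G S T ∨ Splits G T S

/-- The connected component of `G − R` containing `u` (empty if `u ∈ R`). -/
def compOutside (G : SimpleGraph V) (R : Set V) (u : V) : Set V :=
  {y | ReachOutside G R u y}

/-- `C` is a connected component of `G − R`. -/
def IsCompOutside (G : SimpleGraph V) (R : Set V) (C : Set V) : Prop :=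
  ∃ u, u ∉ R ∧ C = compOutside G R u

namespace ReachOutside

variable {G : SimpleGraph V} {R R' : Set V} {x y z : V}

theorem notMem_left (h : ReachOutside G R x y) : x ∉ R := h.1

theorem notMem_right (h : ReachOutside G R x y) : y ∉ R := h.2.1

theorem refl (hx : x ∉ R) : ReachOutside G R x x := ⟨hx, hx, .rfl⟩

theorem symm (h : ReachOutside G R x y) : ReachOutside G R y x :=
  ⟨h.2.1, h.1, h.2.2.symm⟩

theorem trans (h : ReachOutside G R x y) (h' : ReachOutside G R y z) :
    ReachOutside G R x z :=
  ⟨h.1, h'.2.1, h.2.2.trans h'.2.2⟩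

theorem of_adj (hxy : G.Adj x y) (hx : x ∉ R) (hy : y ∉ R) : ReachOutside G R x y :=
  ⟨hx, hy, SimpleGraph.Adj.reachable (G := G.induce Rᶜ) (by simpa using hxy)⟩

theorem mem_of_closed {A : Set V} (hA : ∀ z ∈ A, ∀ z', G.Adj z z' → z' ∉ R → z' ∈ A)
    (h : ReachOutside G R x y) (hx : x ∈ A) : y ∈ A := by
  obtain ⟨_, _, ⟨w⟩⟩ := h
  suffices ∀ {u v : (Rᶜ : Set V)}, (G.induce Rᶜ).Walk u v → (u : V) ∈ A → (v : V) ∈ A from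
    this w hx
  intro u v w
  induction w with
  | nil => exact id
  | cons hadj _ ih =>
    exact fun hu => ih (hA _ hu _ (by simpa using hadj) (Subtype.prop _ : _ ∈ Rᶜ))

theorem of_disjoint_compOutside (h : ReachOutside G R x y)
    (hd : Disjoint (compOutside G R x) R') : ReachOutside G R' x y := by
  have hx : x ∈ compOutside G R x := refl h.notMem_left
  refine (h.mem_of_closed (A := compOutside G R x ∩ {z | ReachOutside G R' x z})
    ?_ ⟨hx, refl (hd.notMem_of_mem_left hx)⟩).2
  rintro z ⟨hzR, hzR'⟩ z' hzz' hz'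
  have hz'C : z' ∈ compOutside G R x := hzR.trans (of_adj hzz' hzR.notMem_right hz')
  exact ⟨hz'C, hzR'.trans (of_adj hzz' hzR'.notMem_right (hd.notMem_of_mem_left hz'C))⟩

theorem mono (hRR' : R' ⊆ R) (h : ReachOutside G R x y) : ReachOutside G R' x y :=
  h.of_disjoint_compOutside <| Set.disjoint_left.mpr fun _ hz hzR' => hz.notMem_right (hRR' hzR')

theorem of_adj_of_mem_compOutside {k w : V} (hk : k ∈ compOutside G R x) (hkw : G.Adj k w)
    (hd : Disjoint (compOutside G R x) R') (hw : w ∉ R') : ReachOutside G R' x w :=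
  (of_disjoint_compOutside hk hd).trans (of_adj hkw (hd.notMem_of_mem_left hk) hw)

end ReachOutside

theorem exists_mem_reachOutside_of_inter_nonempty {G : SimpleGraph V} {S T : Set V}
    (hmeet : ∀ C : Set V, IsCompOutside G S C → (C ∩ T).Nonempty) :
    ∀ u ∉ S, ∃ t ∈ T, ReachOutside G S u t := by
  intro u hu
  obtain ⟨t, hut, htT⟩ := hmeet _ ⟨u, hu, rfl⟩
  exact ⟨t, htT, hut⟩

theorem disjoint_and_pairwise_not_reachOutside {G : SimpleGraph V} {S T : Set V}
    (hT : T.Finite) (hcard : Nat.card (G.induce Sᶜ).ConnectedComponent = T.ncard)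
    (hmeet : ∀ u ∉ S, ∃ t ∈ T, ReachOutside G S u t) :
    Disjoint T S ∧ T.Pairwise fun t t' => ¬ ReachOutside G S t t' := by
  have : Finite ↥(T \ S) := hT.sdiff.to_subtype
  let f : ↥(T \ S) → (G.induce Sᶜ).ConnectedComponent := fun t =>
    (G.induce Sᶜ).connectedComponentMk ⟨t, t.2.2⟩
  have hf : Function.Surjective f := by
    refine SimpleGraph.ConnectedComponent.ind fun ⟨u, hu⟩ => ?_
    obtain ⟨t, htT, _, ht, hut⟩ := hmeet u hu
    exact ⟨⟨t, htT, ht⟩, SimpleGraph.ConnectedComponent.sound hut.symm⟩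
  have hTS : T \ S = T := by
    refine Set.eq_of_subset_of_ncard_le Set.sdiff_subset ?_ hT
    rw [← hcard, ← Nat.card_coe_set_eq]
    exact Nat.card_le_card_of_surjective f hf
  have hinj : Function.Injective f :=
    (hf.bijective_of_nat_card_le (by rw [Nat.card_coe_set_eq, hTS, hcard])).1
  refine ⟨sdiff_eq_left.mp hTS, fun t ht t' ht' hne ⟨hx, hy, hr⟩ => hne ?_⟩
  exact congrArg Subtype.val
    (hinj (SimpleGraph.ConnectedComponent.sound hr) : (⟨t, ht, hx⟩ : ↥(T \ S)) = ⟨t', ht', hy⟩)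

section Triconnected

variable [Fintype V] {G : SimpleGraph V} (htri : IsTriconnected G) {S S' : Set V} {p q : V}
include htri

-- By triconnectivity `R` alone cannot separate `p` from `q`.
theorem exists_adj_compOutside_of_not_reachOutside {R B : Set V} (hR : R.ncard ≤ 2)
    (hRB : R ⊆ B) (hp : p ∉ B) (hq : q ∉ R) (hpq : ¬ ReachOutside G B p q) :
    ∃ w ∈ B \ R, ∃ k ∈ compOutside G B p, G.Adj k w := by
  by_contra! hno
  have hpR : p ∉ R := fun h => hp (hRB h)
  have hreach : ReachOutside G R p q :=
    ⟨hpR, hq, (htri.2 R hR).preconnected ⟨p, hpR⟩ ⟨q, hq⟩⟩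
  refine hpq (hreach.mem_of_closed (A := compOutside G B p) ?_ (.refl hp))
  intro z hz z' hzz' hz'R
  have hz'B : z' ∉ B := fun h => hno z' ⟨h, hz'R⟩ z hz hzz'
  exact ReachOutside.trans hz (.of_adj hzz' (ReachOutside.notMem_right hz) hz'B)

theorem reachOutside_of_mem_sdiff_of_disjoint_compOutside (hS : S.ncard ≤ 3) (hp : p ∉ S)
    (hq : q ∉ S) (hpq : ¬ ReachOutside G S p q) (hclean : Disjoint (compOutside G S p) S')
    {w : V} (hw : w ∈ S \ S') : ReachOutside G S' p w := by
  have hR : (S \ {w}).ncard ≤ 2 := by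
    rw [Set.ncard_sdiff_singleton_of_mem hw.1]; omega
  obtain ⟨w', hw', k, hk, hkw'⟩ :=
    exists_adj_compOutside_of_not_reachOutside htri hR Set.sdiff_subset hp (fun h => hq h.1) hpq
  obtain rfl : w' = w := (by simpa using hw' : w' ∈ S ∧ w' = w).2
  exact .of_adj_of_mem_compOutside hk hkw' hclean hw.2

theorem exists_reachOutside_of_ncard_inter_le (hp : p ∉ S) (hpS' : p ∉ S') (hq : q ∉ S)
    (hpq : ¬ ReachOutside G S p q) (hR : (S' ∩ (S ∪ compOutside G S p)).ncard ≤ 2) :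
    ∃ w ∈ S \ S', ReachOutside G S' p w := by
  set R := S' ∩ (S ∪ compOutside G S p)
  have hpR : p ∉ S ∪ R := by
    rintro (h | h)
    exacts [hp h, hpS' h.1]
  have hqR : q ∉ R := by
    rintro ⟨-, h | h⟩
    exacts [hq h, hpq h]
  obtain ⟨w, ⟨hwSR, hwR⟩, k, hk, hkw⟩ :=
    exists_adj_compOutside_of_not_reachOutside htri hR Set.subset_union_right hpR hqR
      (fun h => hpq (h.mono Set.subset_union_left))
  have hwS : w ∈ S := hwSR.resolve_right hwR
  have hwS' : w ∉ S' := fun h => hwR ⟨h, .inl hwS⟩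
  have hclean : Disjoint (compOutside G (S ∪ R) p) S' := by
    refine Set.disjoint_left.mpr fun z hz hzS' => hz.notMem_right (.inr ⟨hzS', .inr ?_⟩)
    exact ReachOutside.mono Set.subset_union_left hz
  exact ⟨w, ⟨hwS, hwS'⟩, .of_adj_of_mem_compOutside hk hkw hclean hwS'⟩

theorem subset_of_pairwise_not_reachOutside (hS : S.ncard ≤ 3) (hS' : S'.ncard ≤ 3) {a : V}
    (haS : a ∈ S) (haS' : a ∈ S') {T : Set V} (hT : 3 ≤ T.ncard) (hTS : Disjoint T S)
    (hTS' : Disjoint T S') (hsep : T.Pairwise fun t t' => ¬ ReachOutside G S t t')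
    (hsep' : T.Pairwise fun t t' => ¬ ReachOutside G S' t t')
    (hmeet : ∀ u ∉ S, ∃ t ∈ T, ReachOutside G S u t) : S' ⊆ S := by
  intro s' hs'S'
  by_contra hs'S
  obtain ⟨t, htT, hs't⟩ := hmeet s' hs'S
  obtain ⟨u, v, ⟨huT, hut⟩, ⟨hvT, hvt⟩, huv⟩ :=
    (Set.one_lt_ncard_iff (s := T \ {t})).mp (by rw [Set.ncard_sdiff_singleton_of_mem htT]; omega)
  have hs'C : ∀ {p}, p ∈ T → p ≠ t → s' ∉ compOutside G S p := fun hp hpt h =>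
    hsep hp htT hpt (ReachOutside.trans h hs't)
  have hrest : (S' \ {a, s'}).Subsingleton := by
    have has' : a ≠ s' := fun h => hs'S (h ▸ haS)
    rw [← Set.ncard_le_one_iff_subsingleton, Set.ncard_sdiff (by simp [Set.insert_subset_iff,
      haS', hs'S']), Set.ncard_pair has']
    omega
  have hmem_rest : ∀ {p z}, p ∈ T → p ≠ t → z ∈ compOutside G S p → z ∈ S' →
      z ∈ S' \ {a, s'} := by
    rintro p z hpT hpt hz hzS'
    refine ⟨hzS', ?_⟩
    rintro (rfl | rfl)
    exacts [ReachOutside.notMem_right hz haS, hs'C hpT hpt hz]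
  -- `S' \ {a, s'}` has at most one vertex, so it meets at most one of the components
  -- of `u` and `v`.
  obtain ⟨p, hpT, hpt, q, hqT, hqt, hpq, hclean⟩ :
      ∃ p ∈ T, p ≠ t ∧ ∃ q ∈ T, q ≠ t ∧ p ≠ q ∧ Disjoint (compOutside G S q) S' := by
    by_cases hu : Disjoint (compOutside G S u) S'
    · exact ⟨v, hvT, hvt, u, huT, hut, huv.symm, hu⟩
    obtain ⟨z, hzu, hzS'⟩ := Set.not_disjoint_iff.mp hu
    refine ⟨u, huT, hut, v, hvT, hvt, huv, Set.disjoint_left.mpr fun z' hz'v hz'S' => ?_⟩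
    obtain rfl := hrest (hmem_rest huT hut hzu hzS') (hmem_rest hvT hvt hz'v hz'S')
    exact hsep huT hvT huv (ReachOutside.trans hzu (ReachOutside.symm hz'v))
  have hp : p ∉ S := hTS.notMem_of_mem_left hpT
  have hq : q ∉ S := hTS.notMem_of_mem_left hqT
  have hR : (S' ∩ (S ∪ compOutside G S p)).ncard ≤ 2 := by
    refine (Set.ncard_le_ncard (t := S' \ {s'}) ?_).trans ?_
    · rintro z ⟨hzS', hz⟩
      refine ⟨hzS', ?_⟩
      rintro rfl
      exact hz.elim hs'S (hs'C hpT hpt)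
    · rw [Set.ncard_sdiff_singleton_of_mem hs'S']; omega
  obtain ⟨w, hw, hpw⟩ := exists_reachOutside_of_ncard_inter_le htri hp
    (hTS'.notMem_of_mem_left hpT) hq (hsep hpT hqT hpq) hR
  have hqw := reachOutside_of_mem_sdiff_of_disjoint_compOutside htri hS hq hp
    (hsep hqT hpT hpq.symm) hclean hw
  exact hsep' hpT hqT hpq (hpw.trans hqw.symm)

end Triconnected

theorem stmt_16_general [Fintype V] (G : SimpleGraph V)
    (htri : IsTriconnected G)
    (T : Set V) (hT : IsThreeCutset G T)
    (a : V)
    (S S' : Set V) (hS : IsThreeCutset G S) (hS' : IsThreeCutset G S')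
    (haS : a ∈ S)
    (hS3 : Nat.card (G.induce (Sᶜ : Set V)).ConnectedComponent = 3)
    (hsubS : ∀ C : Set V, IsCompOutside G S C → (C ∩ T).Nonempty)
    (haS' : a ∈ S')
    (hS'3 : Nat.card (G.induce (S'ᶜ : Set V)).ConnectedComponent = 3)
    (hsubS' : ∀ C : Set V, IsCompOutside G S' C → (C ∩ T).Nonempty) :
    S = S' := by
  have hmeet := exists_mem_reachOutside_of_inter_nonempty hsubS
  have hmeet' := exists_mem_reachOutside_of_inter_nonempty hsubS'
  obtain ⟨hTS, hsep⟩ :=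
    disjoint_and_pairwise_not_reachOutside T.toFinite (hS3.trans hT.1.symm) hmeet
  obtain ⟨hTS', hsep'⟩ :=
    disjoint_and_pairwise_not_reachOutside T.toFinite (hS'3.trans hT.1.symm) hmeet'
  have hsub : S' ⊆ S := subset_of_pairwise_not_reachOutside htri hS.1.le hS'.1.le haS haS'
    hT.1.ge hTS hTS' hsep hsep' hmeet
  exact (Set.eq_of_subset_of_ncard_le hsub (by rw [hS.1, hS'.1])).symm

/-- Lemma `l3v0`(2): a trivial cutset is subordinated to at most one cutset. -/
theorem stmt_16 [Fintype V] (G : SimpleGraph V)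
    (htri : IsTriconnected G) (hbig : 6 < Fintype.card V)
    (T : Set V) (hT : IsThreeCutset G T)
    (a : V) (ha : IsCompOutside G T {a})
    (S S' : Set V) (hS : IsThreeCutset G S) (hS' : IsThreeCutset G S')
    (haS : a ∈ S)
    (hS3 : Nat.card (G.induce (Sᶜ : Set V)).ConnectedComponent = 3)
    (hsubS : ∀ C : Set V, IsCompOutside G S C → (C ∩ T).Nonempty)
    (haS' : a ∈ S')
    (hS'3 : Nat.card (G.induce (S'ᶜ : Set V)).ConnectedComponent = 3)
    (hsubS' : ∀ C : Set V, IsCompOutside G S' C → (C ∩ T).Nonempty) :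
    S = S' :=
  stmt_16_general G htri T hT a S S' hS hS' haS hS3 hsubS haS' hS'3 hsubS'

end Paper
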